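/- For integers T ≥ 1 and 0 ≤ k ≤ T, one has (1/T)·Σ_{j=1}^{T-k} j/(k+j) ≥ ∫_0^{1-k/T} (1 - k/T - x)/(1 - x) dx. -/

import Mathlib

/-!
Substituting `x = t / T` turns the integrand into `(n - t) / (T - t)` with `n = T - k`, which
is decreasing in `t`. Its integral over `[0, n]` is therefore at most the left Riemann sum
with unit steps, `∑_{i < n} (n - i) / (T - i) = ∑_{j = 1}^{n} j / (k + j)`.
-/

open Finset Set

theorem antitoneOn_sub_div_sub {a b : ℝ} (hba : b ≤ a) :
    AntitoneOn (fun x => (b - x) / (a - x)) (Iic b) := by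
  intro x hx y hy hxy
  simp only [Set.mem_Iic] at hx hy
  rcases hy.trans hba |>.lt_or_eq with hya | rfl
  · rw [div_le_div_iff₀ (by linarith) (by linarith)]
    nlinarith
  · -- `y = a = b`, where the function takes the junk value `0 / 0 = 0`
    obtain rfl : y = b := le_antisymm hy hba
    simpa using div_nonneg (sub_nonneg.2 hx) (sub_nonneg.2 hx)

theorem sum_range_sub_eq_sum_Icc {M : Type*} [AddCommMonoid M] (f : ℕ → M) (n : ℕ) :
    ∑ i ∈ range n, f (n - i) = ∑ j ∈ Icc 1 n, f j := by
  refine sum_nbij' (fun i => n - i) (fun j => n - j) ?_ ?_ ?_ ?_ (fun _ _ => rfl) <;>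
    intro i hi <;> simp only [Finset.mem_range, Finset.mem_Icc] at hi ⊢ <;> omega

theorem AntitoneOn.integral_le_sum_div {f : ℝ → ℝ} {N : ℝ} (hN : 0 < N) {n : ℕ}
    (hf : AntitoneOn f (Icc 0 (n / N))) :
    ∫ x in (0 : ℝ)..n / N, f x ≤ N⁻¹ * ∑ i ∈ range n, f (i / N) := by
  have hscaled : AntitoneOn (fun t => f (t / N)) (Icc 0 (0 + n)) := by
    refine hf.comp_MonotoneOn (fun s _ t _ hst => by gcongr) fun t ht => ?_
    simp only [zero_add, Set.mem_Icc] at ht ⊢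
    exact ⟨div_nonneg ht.1 hN.le, by gcongr; exact ht.2⟩
  have hsub := intervalIntegral.integral_comp_div f hN.ne' (a := 0) (b := n)
  rw [zero_div, smul_eq_mul] at hsub
  rw [eq_inv_mul_iff_mul_eq₀ hN.ne' |>.2 hsub.symm]
  gcongr
  simpa using hscaled.integral_le_sum

theorem stmt_5 (T k : ℕ) (hT : 1 ≤ T) (hk : k ≤ T) :
    (1 / (T : ℝ)) * ∑ j ∈ Finset.Icc 1 (T - k), (j : ℝ) / ((k : ℝ) + (j : ℝ))
      ≥ ∫ x in (0 : ℝ)..(1 - (k : ℝ) / (T : ℝ)), (1 - (k : ℝ) / (T : ℝ) - x) / (1 - x) := by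
  obtain ⟨n, rfl⟩ := Nat.exists_eq_add_of_le hk
  have hT0 : (0 : ℝ) < (k + n : ℕ) := by exact_mod_cast hT
  set c : ℝ := 1 - k / (k + n : ℕ)
  have hc : c = n / (k + n : ℕ) := by
    simp only [c]; field_simp; push_cast; ring
  have hF : AntitoneOn (fun x => (c - x) / (1 - x)) (Icc 0 c) :=
    (antitoneOn_sub_div_sub (by simp only [c]; linarith [div_nonneg k.cast_nonneg hT0.le])).mono
      Set.Icc_subset_Iic_self
  rw [ge_iff_le, one_div]
  calc ∫ x in (0 : ℝ)..c, (c - x) / (1 - x)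
      ≤ ((k + n : ℕ) : ℝ)⁻¹ * ∑ i ∈ range n, (c - i / (k + n : ℕ)) / (1 - i / (k + n : ℕ)) := by
        rw [hc] at hF ⊢; exact hF.integral_le_sum_div hT0
    _ = _ := by
        rw [Nat.add_sub_cancel_left, ← sum_range_sub_eq_sum_Icc]
        refine congrArg _ (sum_congr rfl fun i hi => ?_)
        have hin : (i : ℝ) < n := by exact_mod_cast Finset.mem_range.1 hi
        rw [hc]; push_cast [Nat.cast_sub (Finset.mem_range.1 hi).le]
        have h0 : (k : ℝ) + n ≠ 0 := by exact_mod_cast hT0.ne'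
        have h1 : (k : ℝ) + n - i ≠ 0 := by linarith [k.cast_nonneg (α := ℝ)]
        have h2 : (k : ℝ) + (n - i) ≠ 0 := by linarith [k.cast_nonneg (α := ℝ)]
        field_simp
        ring
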